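/- arXiv:1203.0789 — 4 statements merged into one kernel-verified Lean document; each statement's English description precedes it below -/
import Mathlib

section
/- Let E = (Fin d → ℂ) and let X and X' be complex manifolds modeled on E (Hausdorff). Let the group G = (Fin n → ℂˣ) act on X and on X' by biholomorphisms (MulActions such that every g acts holomorphically on X and on X'). Suppose there exist points q ∈ X and q' ∈ X' whose G-orbits are open and dense in X and in X' respectively. Suppose there is a nonempty index type ι and families of G-invariant open sets V : ι → Set X and V' : ι → Set X' with ⋃ p, V p = X and ⋃ p, V' p = X', and suppose that for every p ∈ ι there is an equivariant biholomorphism from V p onto V' p, i.e., a map φ_p : V p → X' that is injective, holomorphic on V p, has image exactly V' p, has holomorphic inverse, and satisfies φ_p(g • x) = g • φ_p(x) for all g ∈ G and x ∈ V p. Then there exists an equivariant biholomorphism from X onto X': a bijection Φ : X → X' that is holomorphic, has holomorphic inverse, and satisfies Φ(g • x) = g • Φ(x) for all g ∈ G and x ∈ X. -/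
/-!
Each `φ p` maps the open orbit of `q` onto an orbit that is open, hence meets the dense orbit
of `q'` and equals it; since `G` is commutative, translating `φ p` by a group element keeps it
equivariant, so we may assume `φ p q = q'`. Two continuous equivariant maps that agree at `q`
agree on its orbit, hence, by density, on the whole overlap of their domains. The normalized
`φ p`, and likewise their inverses, therefore glue to mutually inverse holomorphic maps, and
the glued map is equivariant because each piece is.
-/

open scoped Manifold
open Set Function MulAction

namespace MulAction

variable {G α β : Type*} [Group G] [MulAction G α] [MulAction G β] [TopologicalSpace α]

theorem mem_of_dense_orbit {q : α} (hq : Dense (orbit G q)) {U : Set α} (hU : IsOpen U)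
    (hUne : U.Nonempty) (hUG : ∀ g : G, ∀ x ∈ U, g • x ∈ U) : q ∈ U := by
  obtain ⟨_, hxU, g, rfl⟩ := hq.inter_open_nonempty U hU hUne
  simpa using hUG g⁻¹ _ hxU

theorem mem_orbit_of_isOpen_orbit {q : α} (hq : Dense (orbit G q)) {x : α}
    (hx : IsOpen (orbit G x)) : x ∈ orbit G q :=
  mem_orbit_symm.1 <| mem_of_dense_orbit hq hx ⟨x, mem_orbit_self x⟩
    fun g _ hy => mem_orbit_of_mem_orbit g hy

omit [TopologicalSpace α] in
theorem image_orbit_of_smul_apply {f : α → β} {q : α} (hf : ∀ g : G, f (g • q) = g • f q) :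
    f '' orbit G q = orbit G (f q) := by
  simp only [orbit, ← range_comp, comp_def, hf]

theorem eqOn_inter_of_dense_orbit [TopologicalSpace β] [T2Space β] {q : α}
    (hq : Dense (orbit G q)) {U₁ U₂ : Set α} (hU₁ : IsOpen U₁) (hU₂ : IsOpen U₂)
    (hU₁G : ∀ g : G, ∀ x ∈ U₁, g • x ∈ U₁) (hU₂G : ∀ g : G, ∀ x ∈ U₂, g • x ∈ U₂)
    {f₁ f₂ : α → β} (hf₁ : ContinuousOn f₁ U₁) (hf₂ : ContinuousOn f₂ U₂)
    (hf₁G : ∀ g : G, ∀ x ∈ U₁, f₁ (g • x) = g • f₁ x)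
    (hf₂G : ∀ g : G, ∀ x ∈ U₂, f₂ (g • x) = g • f₂ x) {q' : β}
    (hf₁q : q ∈ U₁ → f₁ q = q') (hf₂q : q ∈ U₂ → f₂ q = q') : EqOn f₁ f₂ (U₁ ∩ U₂) := by
  rcases (U₁ ∩ U₂).eq_empty_or_nonempty with hU | hU
  · exact hU ▸ eqOn_empty f₁ f₂
  obtain ⟨hqU₁, hqU₂⟩ := mem_of_dense_orbit hq (hU₁.inter hU₂) hU
    fun g x hx => ⟨hU₁G g x hx.1, hU₂G g x hx.2⟩
  refine EqOn.of_subset_closure ?_ (hf₁.mono inter_subset_left) (hf₂.mono inter_subset_right)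
    inter_subset_left (hq.open_subset_closure_inter (hU₁.inter hU₂))
  rintro _ ⟨-, g, rfl⟩
  simp only [hf₁G g q hqU₁, hf₂G g q hqU₂, hf₁q hqU₁, hf₂q hqU₂]

end MulAction

theorem Set.InvOn.smul_apply {G α β : Type*} [Group G] [MulAction G α] [MulAction G β]
    {φ : α → β} {ψ : β → α} {V : Set α} {V' : Set β} (h : InvOn ψ φ V V') (hψ : MapsTo ψ V' V)
    (hVG : ∀ g : G, ∀ x ∈ V, g • x ∈ V) (hφ : ∀ g : G, ∀ x ∈ V, φ (g • x) = g • φ x) :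
    ∀ g : G, ∀ y ∈ V', ψ (g • y) = g • ψ y := by
  intro g y hy
  calc ψ (g • y) = ψ (φ (g • ψ y)) := by rw [hφ g _ (hψ hy), h.2 hy]
    _ = g • ψ y := h.1 (hVG g _ (hψ hy))

section MDifferentiableInvOn

variable {𝕜 : Type*} [NontriviallyNormedField 𝕜]
  {E H : Type*} [NormedAddCommGroup E] [NormedSpace 𝕜 E] [TopologicalSpace H]
  {I : ModelWithCorners 𝕜 E H} {M : Type*} [TopologicalSpace M] [ChartedSpace H M]
  {E' H' : Type*} [NormedAddCommGroup E'] [NormedSpace 𝕜 E'] [TopologicalSpace H']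
  {I' : ModelWithCorners 𝕜 E' H'} {M' : Type*} [TopologicalSpace M'] [ChartedSpace H' M']

variable (I I') in
structure MDifferentiableInvOn (ψ : M' → M) (φ : M → M') (V : Set M) (V' : Set M') : Prop where
  mdifferentiableOn : MDifferentiableOn I I' φ V
  mdifferentiableOn_symm : MDifferentiableOn I' I ψ V'
  mapsTo : MapsTo φ V V'
  mapsTo_symm : MapsTo ψ V' V
  invOn : InvOn ψ φ V V'

namespace MDifferentiableInvOn

variable {ψ : M' → M} {φ : M → M'} {V : Set M} {V' : Set M'}

theorem symm (h : MDifferentiableInvOn I I' ψ φ V V') : MDifferentiableInvOn I' I φ ψ V' V :=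
  ⟨h.mdifferentiableOn_symm, h.mdifferentiableOn, h.mapsTo_symm, h.mapsTo, h.invOn.symm⟩

theorem isOpen_image (h : MDifferentiableInvOn I I' ψ φ V V') (hV' : IsOpen V') {O : Set M}
    (hO : IsOpen O) (hOV : O ⊆ V) : IsOpen (φ '' O) := by
  have : φ '' O = V' ∩ ψ ⁻¹' O := by
    conv_lhs => rw [← inter_eq_left.2 hOV]
    rw [h.invOn.1.image_inter', (h.invOn.bijOn h.mapsTo h.mapsTo_symm).image_eq, inter_comm]
  exact this ▸ h.mdifferentiableOn_symm.continuousOn.isOpen_inter_preimage hV' hO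

theorem smul_left {G : Type*} [Group G] [MulAction G M']
    (hG : ∀ g : G, MDifferentiable I' I' (g • · : M' → M')) (hV'G : ∀ g : G, ∀ y ∈ V', g • y ∈ V')
    (h : MDifferentiableInvOn I I' ψ φ V V') (g : G) :
    MDifferentiableInvOn I I' (fun y => ψ (g • y)) (fun x => g⁻¹ • φ x) V V' where
  mdifferentiableOn := (hG g⁻¹).comp_mdifferentiableOn h.mdifferentiableOn
  mdifferentiableOn_symm := h.mdifferentiableOn_symm.comp (hG g).mdifferentiableOn (hV'G g)
  mapsTo _ hx := hV'G g⁻¹ _ (h.mapsTo hx)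
  mapsTo_symm _ hy := h.mapsTo_symm (hV'G g _ hy)
  invOn := ⟨fun x hx => by simp [h.invOn.1 hx], fun y hy => by simp [h.invOn.2 (hV'G g _ hy)]⟩

theorem apply_mem_orbit {G : Type*} [Group G] [MulAction G M] [MulAction G M']
    (h : MDifferentiableInvOn I I' ψ φ V V') (hV' : IsOpen V') (hVG : ∀ g : G, ∀ x ∈ V, g • x ∈ V)
    (hφ : ∀ g : G, ∀ x ∈ V, φ (g • x) = g • φ x) {q : M} {q' : M'} (hqV : q ∈ V)
    (hq : IsOpen (orbit G q)) (hq' : Dense (orbit G q')) : φ q ∈ orbit G q' := by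
  refine mem_orbit_of_isOpen_orbit hq' ?_
  rw [← image_orbit_of_smul_apply fun g => hφ g q hqV]
  exact h.isOpen_image hV' hq fun _ ⟨g, hg⟩ => hg ▸ hVG g q hqV

end MDifferentiableInvOn

theorem exists_mdifferentiable_eqOn_of_iUnion_eq_univ {ι : Type*} {V : ι → Set M}
    (hV : ∀ i, IsOpen (V i)) (hcov : ⋃ i, V i = univ) {f : ι → M → M'}
    (hf : ∀ i, MDifferentiableOn I I' (f i) (V i)) (hcompat : ∀ i j, EqOn (f i) (f j) (V i ∩ V j)) :
    ∃ F : M → M', MDifferentiable I I' F ∧ ∀ i, EqOn F (f i) (V i) := by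
  let F := liftCover V (fun i x => f i x) (fun i j _ hi hj => hcompat i j ⟨hi, hj⟩) hcov
  have hF : ∀ i, EqOn F (f i) (V i) := fun _ _ hx => liftCover_of_mem hx
  exact ⟨F, mdifferentiable_of_mdifferentiableOn_iUnion_of_isOpen
    (fun i => (hf i).congr (hF i)) hV hcov, hF⟩

theorem MDifferentiableInvOn.exists_glue {ι : Type*} {V : ι → Set M} {V' : ι → Set M'}
    (hV : ∀ i, IsOpen (V i)) (hV' : ∀ i, IsOpen (V' i))
    (hcov : ⋃ i, V i = univ) (hcov' : ⋃ i, V' i = univ) {φ : ι → M → M'} {ψ : ι → M' → M}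
    (h : ∀ i, MDifferentiableInvOn I I' (ψ i) (φ i) (V i) (V' i))
    (hφ : ∀ i j, EqOn (φ i) (φ j) (V i ∩ V j)) (hψ : ∀ i j, EqOn (ψ i) (ψ j) (V' i ∩ V' j)) :
    ∃ Φ : M → M', ∃ Ψ : M' → M, MDifferentiable I I' Φ ∧ MDifferentiable I' I Ψ ∧
      LeftInverse Ψ Φ ∧ RightInverse Ψ Φ ∧ ∀ i, EqOn Φ (φ i) (V i) := by
  obtain ⟨Φ, hΦ, hΦV⟩ :=
    exists_mdifferentiable_eqOn_of_iUnion_eq_univ hV hcov (fun i => (h i).mdifferentiableOn) hφ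
  obtain ⟨Ψ, hΨ, hΨV⟩ := exists_mdifferentiable_eqOn_of_iUnion_eq_univ hV' hcov'
    (fun i => (h i).symm.mdifferentiableOn) hψ
  refine ⟨Φ, Ψ, hΦ, hΨ, fun x => ?_, fun y => ?_, hΦV⟩
  · obtain ⟨i, hi⟩ := mem_iUnion.1 (hcov ▸ mem_univ x)
    rw [hΦV i hi, hΨV i ((h i).mapsTo hi), (h i).invOn.1 hi]
  · obtain ⟨i, hi⟩ := mem_iUnion.1 (hcov' ▸ mem_univ y)
    rw [hΨV i hi, hΦV i ((h i).mapsTo_symm hi), (h i).invOn.2 hi]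

theorem MDifferentiableInvOn.exists_equivariant_glue {G : Type*} [CommGroup G]
    [MulAction G M] [MulAction G M'] [T2Space M] [T2Space M']
    (hG : ∀ g : G, MDifferentiable I' I' (g • · : M' → M'))
    {q : M} {q' : M'} (hq : IsOpen (orbit G q)) (hqd : Dense (orbit G q))
    (hq'd : Dense (orbit G q')) {ι : Type*} {V : ι → Set M} {V' : ι → Set M'}
    (hV : ∀ i, IsOpen (V i)) (hV' : ∀ i, IsOpen (V' i))
    (hVG : ∀ i, ∀ g : G, ∀ x ∈ V i, g • x ∈ V i) (hV'G : ∀ i, ∀ g : G, ∀ y ∈ V' i, g • y ∈ V' i)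
    (hcov : ⋃ i, V i = univ) (hcov' : ⋃ i, V' i = univ) {φ : ι → M → M'} {ψ : ι → M' → M}
    (h : ∀ i, MDifferentiableInvOn I I' (ψ i) (φ i) (V i) (V' i))
    (hφ : ∀ i, ∀ g : G, ∀ x ∈ V i, φ i (g • x) = g • φ i x) :
    ∃ Φ : M → M', ∃ Ψ : M' → M, MDifferentiable I I' Φ ∧ MDifferentiable I' I Ψ ∧
      LeftInverse Ψ Φ ∧ RightInverse Ψ Φ ∧ ∀ g : G, ∀ x, Φ (g • x) = g • Φ x := by
  have hnorm : ∀ i, ∃ g : G, q ∈ V i → φ i q = g • q' := fun i => by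
    by_cases hqV : q ∈ V i
    · obtain ⟨g, hg⟩ := (h i).apply_mem_orbit (hV' i) (hVG i) (hφ i) hqV hq hq'd
      exact ⟨g, fun _ => hg.symm⟩
    · exact ⟨1, fun hqV' => (hqV hqV').elim⟩
  choose g hg using hnorm
  set φ' : ι → M → M' := fun i x => (g i)⁻¹ • φ i x
  set ψ' : ι → M' → M := fun i y => ψ i (g i • y)
  have h' i : MDifferentiableInvOn I I' (ψ' i) (φ' i) (V i) (V' i) := (h i).smul_left hG (hV'G i) _
  have hφ' i : ∀ a : G, ∀ x ∈ V i, φ' i (a • x) = a • φ' i x := fun a x hx => by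
    simp only [φ']
    rw [hφ i a x hx, smul_comm]
  have hψ' i := (h' i).invOn.smul_apply (h' i).mapsTo_symm (hVG i) (hφ' i)
  have hφ'q i (hqV : q ∈ V i) : φ' i q = q' := by simp [φ', hg i hqV]
  have hψ'q' i (hq'V : q' ∈ V' i) : ψ' i q' = q := by
    have hqV := mem_of_dense_orbit hqd (hV i) ⟨_, (h' i).mapsTo_symm hq'V⟩ (hVG i)
    rw [← hφ'q i hqV, (h' i).invOn.1 hqV]
  obtain ⟨Φ, Ψ, hΦ, hΨ, hl, hr, hΦV⟩ := MDifferentiableInvOn.exists_glue hV hV' hcov hcov' h'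
    (fun i j => eqOn_inter_of_dense_orbit hqd (hV i) (hV j) (hVG i) (hVG j)
      (h' i).mdifferentiableOn.continuousOn (h' j).mdifferentiableOn.continuousOn
      (hφ' i) (hφ' j) (hφ'q i) (hφ'q j))
    (fun i j => eqOn_inter_of_dense_orbit hq'd (hV' i) (hV' j) (hV'G i) (hV'G j)
      (h' i).symm.mdifferentiableOn.continuousOn (h' j).symm.mdifferentiableOn.continuousOn
      (hψ' i) (hψ' j) (hψ'q' i) (hψ'q' j))
  refine ⟨Φ, Ψ, hΦ, hΨ, hl, hr, fun a x => ?_⟩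
  obtain ⟨i, hi⟩ := mem_iUnion.1 (hcov ▸ mem_univ x)
  rw [hΦV i (hVG i a x hi), hΦV i hi, hφ' i a x hi]

end MDifferentiableInvOn

theorem stmt8_general (n d : ℕ) {X X' : Type} [TopologicalSpace X] [T2Space X]
    [ChartedSpace (Fin d → ℂ) X] [TopologicalSpace X'] [T2Space X'] [ChartedSpace (Fin d → ℂ) X']
    [MulAction (Fin n → ℂˣ) X] [MulAction (Fin n → ℂˣ) X']
    (holX' : ∀ g : Fin n → ℂˣ,
      MDifferentiable 𝓘(ℂ, Fin d → ℂ) 𝓘(ℂ, Fin d → ℂ) (fun x : X' => g • x))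
    (q : X) (q' : X')
    (hq : IsOpen (MulAction.orbit (Fin n → ℂˣ) q) ∧ Dense (MulAction.orbit (Fin n → ℂˣ) q))
    (hq' : IsOpen (MulAction.orbit (Fin n → ℂˣ) q') ∧
      Dense (MulAction.orbit (Fin n → ℂˣ) q'))
    (ι : Type) (V : ι → Set X) (V' : ι → Set X')
    (hVopen : ∀ p, IsOpen (V p)) (hV'open : ∀ p, IsOpen (V' p))
    (hVinv : ∀ p, ∀ g : Fin n → ℂˣ, ∀ x ∈ V p, g • x ∈ V p)
    (hV'inv : ∀ p, ∀ g : Fin n → ℂˣ, ∀ x ∈ V' p, g • x ∈ V' p)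
    (hVcover : (⋃ p, V p) = Set.univ) (hV'cover : (⋃ p, V' p) = Set.univ)
    (φ : ι → X → X')
    (hφ : ∀ p : ι,
      MDifferentiableOn 𝓘(ℂ, Fin d → ℂ) 𝓘(ℂ, Fin d → ℂ) (φ p) (V p) ∧
      Set.InjOn (φ p) (V p) ∧
      φ p '' V p = V' p ∧
      (∃ ψ : X' → X,
        MDifferentiableOn 𝓘(ℂ, Fin d → ℂ) 𝓘(ℂ, Fin d → ℂ) ψ (V' p) ∧
        (∀ y ∈ V' p, ψ y ∈ V p) ∧
        (∀ x ∈ V p, ψ (φ p x) = x) ∧ (∀ y ∈ V' p, φ p (ψ y) = y)) ∧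
      (∀ g : Fin n → ℂˣ, ∀ x ∈ V p, φ p (g • x) = g • φ p x)) :
    ∃ Φ : X → X',
      Function.Bijective Φ ∧
      MDifferentiable 𝓘(ℂ, Fin d → ℂ) 𝓘(ℂ, Fin d → ℂ) Φ ∧
      (∃ Ψ : X' → X,
        MDifferentiable 𝓘(ℂ, Fin d → ℂ) 𝓘(ℂ, Fin d → ℂ) Ψ ∧
        Function.LeftInverse Ψ Φ ∧ Function.RightInverse Ψ Φ) ∧
      (∀ g : Fin n → ℂˣ, ∀ x : X, Φ (g • x) = g • Φ x) := by
  choose ψ hψ hψV hψl hψr using fun p => (hφ p).2.2.2.1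
  have h p : MDifferentiableInvOn 𝓘(ℂ, Fin d → ℂ) 𝓘(ℂ, Fin d → ℂ) (ψ p) (φ p) (V p) (V' p) :=
    ⟨(hφ p).1, hψ p, (hφ p).2.2.1 ▸ mapsTo_image _ _, hψV p, hψl p, hψr p⟩
  obtain ⟨Φ, Ψ, hΦ, hΨ, hl, hr, hΦG⟩ := MDifferentiableInvOn.exists_equivariant_glue holX'
    hq.1 hq.2 hq'.2 hVopen hV'open hVinv hV'inv hVcover hV'cover h fun p => (hφ p).2.2.2.2
  exact ⟨Φ, ⟨hl.injective, hr.surjective⟩, hΦ, ⟨Ψ, hΨ, hl, hr⟩, hΦG⟩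

/-- Gluing equivariant biholomorphisms: if `X` and `X'` are complex
manifolds with holomorphic `G = (ℂˣ)ⁿ`-actions having open dense orbits, covered by
`G`-invariant open families `V`, `V'` indexed by a nonempty type, with an equivariant
biholomorphism `V p → V' p` for each index `p`, then `X` and `X'` are equivariantly
biholomorphic. -/
theorem stmt8 (n d : ℕ) {X X' : Type} [TopologicalSpace X] [T2Space X]
    [ChartedSpace (Fin d → ℂ) X] [IsManifold 𝓘(ℂ, Fin d → ℂ) (⊤ : ℕ∞) X]
    [TopologicalSpace X'] [T2Space X']
    [ChartedSpace (Fin d → ℂ) X'] [IsManifold 𝓘(ℂ, Fin d → ℂ) (⊤ : ℕ∞) X']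
    [MulAction (Fin n → ℂˣ) X] [MulAction (Fin n → ℂˣ) X']
    (holX : ∀ g : Fin n → ℂˣ,
      MDifferentiable 𝓘(ℂ, Fin d → ℂ) 𝓘(ℂ, Fin d → ℂ) (fun x : X => g • x))
    (holX' : ∀ g : Fin n → ℂˣ,
      MDifferentiable 𝓘(ℂ, Fin d → ℂ) 𝓘(ℂ, Fin d → ℂ) (fun x : X' => g • x))
    (q : X) (q' : X')
    (hq : IsOpen (MulAction.orbit (Fin n → ℂˣ) q) ∧ Dense (MulAction.orbit (Fin n → ℂˣ) q))
    (hq' : IsOpen (MulAction.orbit (Fin n → ℂˣ) q') ∧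
      Dense (MulAction.orbit (Fin n → ℂˣ) q'))
    (ι : Type) [Nonempty ι] (V : ι → Set X) (V' : ι → Set X')
    (hVopen : ∀ p, IsOpen (V p)) (hV'open : ∀ p, IsOpen (V' p))
    (hVinv : ∀ p, ∀ g : Fin n → ℂˣ, ∀ x ∈ V p, g • x ∈ V p)
    (hV'inv : ∀ p, ∀ g : Fin n → ℂˣ, ∀ x ∈ V' p, g • x ∈ V' p)
    (hVcover : (⋃ p, V p) = Set.univ) (hV'cover : (⋃ p, V' p) = Set.univ)
    (φ : ι → X → X')
    (hφ : ∀ p : ι,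
      MDifferentiableOn 𝓘(ℂ, Fin d → ℂ) 𝓘(ℂ, Fin d → ℂ) (φ p) (V p) ∧
      Set.InjOn (φ p) (V p) ∧
      φ p '' V p = V' p ∧
      (∃ ψ : X' → X,
        MDifferentiableOn 𝓘(ℂ, Fin d → ℂ) 𝓘(ℂ, Fin d → ℂ) ψ (V' p) ∧
        (∀ y ∈ V' p, ψ y ∈ V p) ∧
        (∀ x ∈ V p, ψ (φ p x) = x) ∧ (∀ y ∈ V' p, φ p (ψ y) = y)) ∧
      (∀ g : Fin n → ℂˣ, ∀ x ∈ V p, φ p (g • x) = g • φ p x)) :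
    ∃ Φ : X → X',
      Function.Bijective Φ ∧
      MDifferentiable 𝓘(ℂ, Fin d → ℂ) 𝓘(ℂ, Fin d → ℂ) Φ ∧
      (∃ Ψ : X' → X,
        MDifferentiable 𝓘(ℂ, Fin d → ℂ) 𝓘(ℂ, Fin d → ℂ) Ψ ∧
        Function.LeftInverse Ψ Φ ∧ Function.RightInverse Ψ Φ) ∧
      (∀ g : Fin n → ℂˣ, ∀ x : X, Φ (g • x) = g • Φ x) :=
  stmt8_general n d holX' q q' hq hq' ι V V' hVopen hV'open hVinv hV'inv hVcover hV'cover φ hφ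
end

section
/- Let V be a real vector space, m a natural number, and λ : Fin m → V. Let Σ be a collection of subsets of Fin m that is closed under taking subsets (if I ∈ Σ and I' ⊆ I then I' ∈ Σ). For I ⊆ Fin m define C_I = {x ∈ V | ∃ a : Fin m → ℝ, (∀ i ∈ I, 0 ≤ a i) ∧ x = ∑ i ∈ I, a i • λ i} and C_I⁰ = {x ∈ V | ∃ a : Fin m → ℝ, (∀ i ∈ I, 0 < a i) ∧ x = ∑ i ∈ I, a i • λ i}. Assume: (i) for every I ∈ Σ the family (λ i)_{i ∈ I} is linearly independent; (ii) for all I, J ∈ Σ with I ≠ J, the sets C_I⁰ and C_J⁰ are disjoint. Then for all I, J ∈ Σ, C_I ∩ C_J = C_{I ∩ J}. -/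
/-- The cone positively spanned by the vectors `l i`, `i ∈ I`. -/
def posCone {V : Type*} [AddCommGroup V] [Module ℝ V] {ι : Type*}
    (l : ι → V) (I : Finset ι) : Set V :=
  {x | ∃ a : ι → ℝ, (∀ i ∈ I, 0 ≤ a i) ∧ x = ∑ i ∈ I, a i • l i}

/-- The relative interior of the cone positively spanned by `l i`, `i ∈ I`. -/
def posConeInt {V : Type*} [AddCommGroup V] [Module ℝ V] {ι : Type*}
    (l : ι → V) (I : Finset ι) : Set V :=
  {x | ∃ a : ι → ℝ, (∀ i ∈ I, 0 < a i) ∧ x = ∑ i ∈ I, a i • l i}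

lemma posCone_mono {V : Type*} [AddCommGroup V] [Module ℝ V] {ι : Type*} [DecidableEq ι]
    (l : ι → V) {K I : Finset ι} (h : K ⊆ I) : posCone l K ⊆ posCone l I := by
  rintro x ⟨a, ha, hx⟩
  refine ⟨fun i => if i ∈ K then a i else 0, fun i _ => ?_, ?_⟩
  · by_cases hK : i ∈ K
    · simpa [hK] using ha i hK
    · simp [hK]
  · rw [hx, ← Finset.sum_subset h (fun i _ hi => by simp [hi])]
    exact Finset.sum_congr rfl fun i hi => by simp [hi]

lemma posConeInt_subset_posCone {V : Type*} [AddCommGroup V] [Module ℝ V] {ι : Type*}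
    [DecidableEq ι] (l : ι → V) {K I : Finset ι} (h : K ⊆ I) :
    posConeInt l K ⊆ posCone l I := by
  rintro x ⟨a, ha, hx⟩
  exact posCone_mono l h ⟨a, fun i hi => (ha i hi).le, hx⟩

lemma exists_posConeInt {V : Type*} [AddCommGroup V] [Module ℝ V] {ι : Type*} [DecidableEq ι]
    (l : ι → V) {I : Finset ι} {x : V} (hx : x ∈ posCone l I) :
    ∃ K : Finset ι, K ⊆ I ∧ x ∈ posConeInt l K := by
  obtain ⟨a, ha, hx⟩ := hx
  refine ⟨I.filter (fun i => 0 < a i), Finset.filter_subset _ _, a, ?_, ?_⟩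
  · intro i hi
    exact (Finset.mem_filter.mp hi).2
  · rw [hx, Finset.sum_filter_of_ne]
    intro i hi hne
    rcases lt_or_eq_of_le (ha i hi) with h | h
    · exact h
    · exact absurd (by rw [← h, zero_smul]) hne

/-- If `Σ` is a collection of subsets of `Fin m` closed under taking
subsets, such that for each `I ∈ Σ` the vectors `l i`, `i ∈ I`, are linearly independent,
and the relative interiors of the cones `C_I`, `I ∈ Σ`, are pairwise disjoint, then
`C_I ∩ C_J = C_{I ∩ J}` for all `I, J ∈ Σ`. -/
theorem stmt11 {V : Type*} [AddCommGroup V] [Module ℝ V] {m : ℕ}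
    (l : Fin m → V) (Sig : Set (Finset (Fin m)))
    (hdown : ∀ I ∈ Sig, ∀ I' : Finset (Fin m), I' ⊆ I → I' ∈ Sig)
    (hli : ∀ I ∈ Sig, LinearIndependent ℝ (fun i : (I : Set (Fin m)) => l i))
    (hdisj : ∀ I ∈ Sig, ∀ J ∈ Sig, I ≠ J → Disjoint (posConeInt l I) (posConeInt l J)) :
    ∀ I ∈ Sig, ∀ J ∈ Sig, posCone l I ∩ posCone l J = posCone l (I ∩ J) := by
  intro I hI J hJ
  apply Set.Subset.antisymm
  · rintro x ⟨hxI, hxJ⟩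
    obtain ⟨K, hKI, hxK⟩ := exists_posConeInt l hxI
    obtain ⟨K', hKJ, hxK'⟩ := exists_posConeInt l hxJ
    have hKeq : K = K' := by
      by_contra hne
      exact (hdisj K (hdown I hI K hKI) K' (hdown J hJ K' hKJ) hne).ne_of_mem hxK hxK' rfl
    have : K ⊆ I ∩ J := Finset.subset_inter hKI (hKeq ▸ hKJ)
    exact posConeInt_subset_posCone l this hxK
  · intro x hx
    exact ⟨posCone_mono l Finset.inter_subset_left hx,
      posCone_mono l Finset.inter_subset_right hx⟩
end

section
/- Let X be a topological space, let S ⊆ X be a closed set with empty interior such that X \ S is preconnected, and let A ⊆ X be a closed set such that A \ S is open and nonempty. Then A = X. -/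
/-- If `S` is a closed set with empty interior whose complement is
preconnected, then any closed set `A` such that `A \ S` is open and nonempty must be the
whole space. -/
theorem stmt12 {X : Type*} [TopologicalSpace X] (S A : Set X)
    (hSclosed : IsClosed S) (hSint : interior S = ∅)
    (hconn : IsPreconnected (Sᶜ))
    (hAclosed : IsClosed A) (hAopen : IsOpen (A \ S)) (hAne : (A \ S).Nonempty) :
    A = Set.univ := by
  -- Show Sᶜ ⊆ A using preconnectedness with cover (A \ S) ∪ Aᶜ
  have hcov : Sᶜ ⊆ (A \ S) ∪ Aᶜ := by
    intro x hx
    by_cases hxA : x ∈ A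
    · exact Or.inl ⟨hxA, hx⟩
    · exact Or.inr hxA
  have h1 : (Sᶜ ∩ (A \ S)).Nonempty := by
    obtain ⟨x, hx⟩ := hAne
    exact ⟨x, hx.2, hx⟩
  have hVempty : Sᶜ ∩ Aᶜ = ∅ := by
    by_contra h
    have h2 : (Sᶜ ∩ Aᶜ).Nonempty := Set.nonempty_iff_ne_empty.mpr h
    obtain ⟨y, hy⟩ := hconn (A \ S) Aᶜ hAopen hAclosed.isOpen_compl hcov h1 h2
    exact hy.2.2 hy.2.1.1
  have hScA : Sᶜ ⊆ A := by
    intro x hx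
    by_contra hxA
    exact Set.eq_empty_iff_forall_notMem.mp hVempty x ⟨hx, hxA⟩
  have hAcS : Aᶜ ⊆ S := fun x hx => by
    by_contra hxS
    exact hx (hScA hxS)
  have : Aᶜ ⊆ interior S := interior_maximal hAcS hAclosed.isOpen_compl
  rw [hSint, Set.subset_empty_iff, Set.compl_empty_iff] at this
  exact this
end

section
/- Let G be a compact topological group acting continuously on a topological space M (a MulAction with ContinuousSMul). Then for every open set U ⊆ M, the set ⋂ g : G, g • U is open in M. -/
open scoped Pointwise

/- The complement of `⋂ g, g • U` is the projection to `M` of the closed set of pairs `(g, x)`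
with `g • x ∉ U`, and projecting along a compact factor is a closed map. -/

theorem isOpen_setOf_forall_mem_of_compactSpace {X Y Z : Type*} [TopologicalSpace X]
    [TopologicalSpace Y] [TopologicalSpace Z] [CompactSpace X] {f : X × Y → Z}
    (hf : Continuous f) {U : Set Z} (hU : IsOpen U) :
    IsOpen {y | ∀ x, f (x, y) ∈ U} := by
  have hcompl : {y | ∀ x, f (x, y) ∈ U}ᶜ = Prod.snd '' (f ⁻¹' Uᶜ) := by
    ext y
    simp
  rw [← isClosed_compl_iff, hcompl]
  exact isClosedMap_snd_of_compactSpace _ (hU.isClosed_compl.preimage hf)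

theorem Set.iInter_smul_eq_setOf_forall_smul_mem {G M : Type*} [Group G] [MulAction G M]
    (U : Set M) : ⋂ g : G, g • U = {x | ∀ g : G, g • x ∈ U} := by
  ext x
  simp only [mem_iInter, mem_ofPred_eq]
  exact (Equiv.inv G).forall_congr fun {_} => mem_smul_set_iff_inv_smul_mem

theorem stmt13_general {G M : Type*} [Group G] [TopologicalSpace G]
    [CompactSpace G] [TopologicalSpace M] [MulAction G M] [ContinuousSMul G M]
    (U : Set M) (hU : IsOpen U) :
    IsOpen (⋂ g : G, g • U) := by
  rw [Set.iInter_smul_eq_setOf_forall_smul_mem]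
  exact isOpen_setOf_forall_mem_of_compactSpace continuous_smul hU

/-- For a continuous action of a compact topological group `G` on a
topological space `M` and an open set `U ⊆ M`, the largest invariant subset
`⋂ g, g • U` of `U` is open. -/
theorem stmt13 {G M : Type*} [Group G] [TopologicalSpace G] [IsTopologicalGroup G]
    [CompactSpace G] [TopologicalSpace M] [MulAction G M] [ContinuousSMul G M]
    (U : Set M) (hU : IsOpen U) :
    IsOpen (⋂ g : G, g • U) :=
  stmt13_general U hU
end
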